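/- arXiv:2202.13634 — 8 statements merged into one kernel-verified Lean document; each statement's English description precedes it below -/
import Mathlib

section
/- Fix an integer $v \ge 1$, reals $L > 0$, $\epsilon > 0$, strictly positive reals $\ell_1,\dots,\ell_v$, and a real $q > 0$ with $q \ne 1$. For $\sigma > 0$ define the moment sums $M_q(\sigma) = \sum_{j=1}^v \Big(\sigma + \frac{\pi\,\epsilon\,\ell_j}{2L(L+\epsilon\ell_j)}\Big)^{-2q}$, and define $\zeta_{G,v}(s) = \sum_{j=1}^v \Big(\frac{\ell_j}{L+\epsilon\ell_j}\Big)^{-s}$. Then $\lim_{\sigma \to 0^+} \frac{\log M_q(\sigma) - q\,\log M_1(\sigma)}{1-q} = \frac{\log \zeta_{G,v}(2q) - q\,\log \zeta_{G,v}(2)}{1-q}.$ -/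
/-- ground-state fractal exponent formula at fixed `v`
(Theorem 2.3, first part). -/
theorem ground_state_fractal_exponent_fixed_v
    (v : ℕ) (hv : 1 ≤ v) (L ε : ℝ) (hL : 0 < L) (hε : 0 < ε)
    (ℓ : ℕ → ℝ) (hℓ : ∀ j ∈ Finset.Icc 1 v, 0 < ℓ j)
    (q : ℝ) (hq0 : 0 < q) (hq1 : q ≠ 1)
    (M : ℝ → ℝ → ℝ)
    (hM : ∀ p σ, M p σ = ∑ j ∈ Finset.Icc 1 v,
      (σ + Real.pi * ε * ℓ j / (2 * L * (L + ε * ℓ j))) ^ (-(2 * p)))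
    (ζ : ℝ → ℝ)
    (hζ : ∀ s, ζ s = ∑ j ∈ Finset.Icc 1 v, (ℓ j / (L + ε * ℓ j)) ^ (-s)) :
    Filter.Tendsto (fun σ => (Real.log (M q σ) - q * Real.log (M 1 σ)) / (1 - q))
      (nhdsWithin 0 (Set.Ioi 0))
      (nhds ((Real.log (ζ (2 * q)) - q * Real.log (ζ 2)) / (1 - q))) := by
  have hπ := Real.pi_pos
  set A : ℝ := Real.pi * ε / (2 * L) with hAdef
  have hA : 0 < A := by positivity
  have hden : ∀ j ∈ Finset.Icc 1 v, 0 < L + ε * ℓ j := by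
    intro j hj; have := hℓ j hj; positivity
  have hw : ∀ j ∈ Finset.Icc 1 v, 0 < ℓ j / (L + ε * ℓ j) := fun j hj =>
    div_pos (hℓ j hj) (hden j hj)
  have hc : ∀ j ∈ Finset.Icc 1 v,
      Real.pi * ε * ℓ j / (2 * L * (L + ε * ℓ j)) = A * (ℓ j / (L + ε * ℓ j)) := by
    intro j hj
    have h1 : (L + ε * ℓ j) ≠ 0 := (hden j hj).ne'
    field_simp [hAdef]
    rw [hAdef]; field_simp [hL.ne']
  have hcpos : ∀ j ∈ Finset.Icc 1 v,
      0 < Real.pi * ε * ℓ j / (2 * L * (L + ε * ℓ j)) := by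
    intro j hj; rw [hc j hj]; exact mul_pos hA (hw j hj)
  have hne : (Finset.Icc 1 v).Nonempty := ⟨1, Finset.mem_Icc.mpr ⟨le_refl 1, hv⟩⟩
  have hζpos : ∀ s, 0 < ζ s := by
    intro s; rw [hζ]
    exact Finset.sum_pos (fun j hj => Real.rpow_pos_of_pos (hw j hj) _) hne
  have hM0 : ∀ p : ℝ, M p 0 = A ^ (-(2 * p)) * ζ (2 * p) := by
    intro p
    rw [hM, hζ, Finset.mul_sum]
    refine Finset.sum_congr rfl fun j hj => ?_
    rw [zero_add, hc j hj, Real.mul_rpow hA.le (hw j hj).le]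
  have hM0pos : ∀ p : ℝ, 0 < M p 0 := fun p => by
    rw [hM0]; exact mul_pos (Real.rpow_pos_of_pos hA _) (hζpos _)
  have hTM : ∀ p : ℝ, Filter.Tendsto (fun σ => M p σ)
      (nhdsWithin 0 (Set.Ioi 0)) (nhds (M p 0)) := by
    intro p
    have : Filter.Tendsto (fun σ : ℝ => ∑ j ∈ Finset.Icc 1 v,
        (σ + Real.pi * ε * ℓ j / (2 * L * (L + ε * ℓ j))) ^ (-(2 * p)))
        (nhdsWithin 0 (Set.Ioi 0))
        (nhds (∑ j ∈ Finset.Icc 1 v,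
          (0 + Real.pi * ε * ℓ j / (2 * L * (L + ε * ℓ j))) ^ (-(2 * p)))) := by
      refine tendsto_finset_sum _ fun j hj => ?_
      have hbase : Filter.Tendsto
          (fun σ : ℝ => σ + Real.pi * ε * ℓ j / (2 * L * (L + ε * ℓ j)))
          (nhdsWithin 0 (Set.Ioi 0))
          (nhds (0 + Real.pi * ε * ℓ j / (2 * L * (L + ε * ℓ j)))) :=
        ((continuous_id.add continuous_const).tendsto 0).mono_left nhdsWithin_le_nhds
      have hrpow : ContinuousAt (fun x : ℝ => x ^ (-(2 * p)))
          (0 + Real.pi * ε * ℓ j / (2 * L * (L + ε * ℓ j))) := by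
        apply Real.continuousAt_rpow_const
        left
        rw [zero_add]
        exact (hcpos j hj).ne'
      exact hrpow.tendsto.comp hbase
    simpa only [← hM] using this
  have hLq : Filter.Tendsto (fun σ => Real.log (M q σ))
      (nhdsWithin 0 (Set.Ioi 0)) (nhds (Real.log (M q 0))) :=
    (Real.continuousAt_log (hM0pos q).ne').tendsto.comp (hTM q)
  have hL1 : Filter.Tendsto (fun σ => Real.log (M 1 σ))
      (nhdsWithin 0 (Set.Ioi 0)) (nhds (Real.log (M 1 0))) :=
    (Real.continuousAt_log (hM0pos 1).ne').tendsto.comp (hTM 1)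
  have hT : Filter.Tendsto (fun σ => (Real.log (M q σ) - q * Real.log (M 1 σ)) / (1 - q))
      (nhdsWithin 0 (Set.Ioi 0))
      (nhds ((Real.log (M q 0) - q * Real.log (M 1 0)) / (1 - q))) :=
    (hLq.sub (hL1.const_mul q)).div_const _
  have hlog : ∀ p : ℝ, Real.log (M p 0) = -(2 * p) * Real.log A + Real.log (ζ (2 * p)) := by
    intro p
    rw [hM0, Real.log_mul (Real.rpow_pos_of_pos hA _).ne' (hζpos _).ne', Real.log_rpow hA]
  have hval : (Real.log (M q 0) - q * Real.log (M 1 0)) / (1 - q)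
      = (Real.log (ζ (2 * q)) - q * Real.log (ζ 2)) / (1 - q) := by
    rw [hlog q, hlog 1, mul_one]
    ring_nf
  rwa [hval] at hT
end

section
/- Let $q > 1/2$ be real with $q \ne 1$, let $L > 0$, let $(\ell_j)_{j \ge 1}$ be a nondecreasing sequence of strictly positive reals such that both series $\sum_{j=1}^\infty \ell_j^{-2q}$ and $\sum_{j=1}^\infty \ell_j^{-2}$ converge, and let $\epsilon : \mathbb{N} \to (0,\infty)$ satisfy $\epsilon(v)\,\ell_v \to 0$ as $v \to \infty$. Define $\zeta_{G,v}(s) = \sum_{j=1}^v \big(\ell_j/(L+\epsilon(v)\ell_j)\big)^{-s}$, the finite graph zeta function, and $D_{q}(v) = \frac{\log \zeta_{G,v}(2q) - q\,\log\zeta_{G,v}(2)}{1-q}$. Then $\lim_{v\to\infty} D_q(v) = \frac{\log \zeta_G(2q) - q\,\log \zeta_G(2)}{1-q}$, where $\zeta_G(s) = \sum_{j=1}^\infty \ell_j^{-s}$. -/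
open Filter Topology Finset Real

/-!
Each term of the finite zeta function factors as `(L + ε v * ℓ j) ^ s * ℓ j ^ (-s)`. Since `ℓ` is
nondecreasing, for `j ≤ v` the weight lies between `L ^ s` and `(L + ε v * ℓ v) ^ s → L ^ s`, so for
`s > 0` the finite zeta function tends to `L ^ s * ζ_G(s)`. The fractal exponent is unchanged when
every `ζ(s)` is rescaled to `c ^ s * ζ(s)`, so the factor `L` drops out in the limit.
-/

theorem Finset.sum_Icc_one_eq_sum_range {M : Type*} [AddCommMonoid M] (f : ℕ → M) (v : ℕ) :
    ∑ j ∈ Icc 1 v, f j = ∑ j ∈ range v, f (j + 1) := by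
  rw [range_eq_Ico, sum_Ico_add', zero_add, Ico_add_one_right_eq_Icc]

theorem Real.div_rpow_neg_eq_mul {a b : ℝ} (ha : 0 ≤ a) (hb : 0 ≤ b) (s : ℝ) :
    (a / b) ^ (-s) = b ^ s * a ^ (-s) := by
  rw [div_rpow ha hb, rpow_neg hb, div_inv_eq_mul, mul_comm]

theorem Real.log_rpow_mul_sub_mul_log_rpow_mul {c x y : ℝ} (hc : 0 < c) (hx : x ≠ 0) (hy : y ≠ 0)
    (s q : ℝ) : log (c ^ (s * q) * x) - q * log (c ^ s * y) = log x - q * log y := by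
  rw [log_mul (rpow_pos_of_pos hc _).ne' hx, log_mul (rpow_pos_of_pos hc _).ne' hy,
    log_rpow hc, log_rpow hc]
  ring

theorem tendsto_sum_range_mul_of_le_of_le {a u : ℕ → ℝ} {w : ℕ → ℕ → ℝ} {c T : ℝ}
    (ha : ∀ j, 0 ≤ a j) (hT : HasSum a T) (hlow : ∀ v, ∀ j < v, c ≤ w v j)
    (hup : ∀ v, ∀ j < v, w v j ≤ u v) (hu : Tendsto u atTop (𝓝 c)) :
    Tendsto (fun v => ∑ j ∈ range v, w v j * a j) atTop (𝓝 (c * T)) := by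
  have hS := hT.tendsto_sum_nat
  refine tendsto_of_tendsto_of_tendsto_of_le_of_le (hS.const_mul c) (hu.mul hS)
    (fun v => ?_) (fun v => ?_) <;> rw [mul_sum] <;> refine sum_le_sum fun j hj => ?_
  · exact mul_le_mul_of_nonneg_right (hlow v j (mem_range.1 hj)) (ha j)
  · exact mul_le_mul_of_nonneg_right (hup v j (mem_range.1 hj)) (ha j)

theorem tendsto_sum_Icc_div_add_mul_rpow_neg {L s : ℝ} {ℓ ε : ℕ → ℝ} (hL : 0 ≤ L) (hs : 0 < s)
    (hℓ : ∀ j, 1 ≤ j → 0 ≤ ℓ j) (hmono : ∀ j, 1 ≤ j → ℓ j ≤ ℓ (j + 1)) (hε : ∀ v, 0 ≤ ε v)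
    (hεℓ : Tendsto (fun v => ε v * ℓ v) atTop (𝓝 0))
    (hsum : Summable fun j : ℕ => ℓ (j + 1) ^ (-s)) :
    Tendsto (fun v => ∑ j ∈ Icc 1 v, (ℓ j / (L + ε v * ℓ j)) ^ (-s)) atTop
      (𝓝 (L ^ s * ∑' j : ℕ, ℓ (j + 1) ^ (-s))) := by
  have hℓ' (j : ℕ) : 0 ≤ ℓ (j + 1) := hℓ _ (Nat.le_add_left 1 j)
  have hmono' : MonotoneOn ℓ (Set.Ici 1) := monotoneOn_nat_Ici_of_le_succ hmono
  have hterm (v j : ℕ) : (ℓ (j + 1) / (L + ε v * ℓ (j + 1))) ^ (-s)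
      = (L + ε v * ℓ (j + 1)) ^ s * ℓ (j + 1) ^ (-s) :=
    div_rpow_neg_eq_mul (hℓ' j) (add_nonneg hL (mul_nonneg (hε v) (hℓ' j))) s
  have hlim : Tendsto (fun v => (L + ε v * ℓ v) ^ s) atTop (𝓝 (L ^ s)) := by
    simpa using (tendsto_const_nhds.add hεℓ).rpow_const (Or.inr hs.le)
  simp only [sum_Icc_one_eq_sum_range, hterm]
  refine tendsto_sum_range_mul_of_le_of_le (fun j => rpow_nonneg (hℓ' j) _) hsum.hasSum
    (fun v j _ => ?_) (fun v j hj => ?_) hlim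
  · exact rpow_le_rpow hL (le_add_of_nonneg_right (mul_nonneg (hε v) (hℓ' j))) hs.le
  · have hℓv : ℓ (j + 1) ≤ ℓ v :=
      hmono' (Set.mem_Ici.2 (Nat.le_add_left 1 j)) (Set.mem_Ici.2 (by omega)) hj
    exact rpow_le_rpow (add_nonneg hL (mul_nonneg (hε v) (hℓ' j)))
      (add_le_add_right (mul_le_mul_of_nonneg_left hℓv (hε v)) L) hs.le

theorem ground_state_fractal_exponent_limit_general
    (q : ℝ) (hq : 1/2 < q) (L : ℝ) (hL : 0 < L)
    (ℓ : ℕ → ℝ) (hpos : ∀ j, 1 ≤ j → 0 < ℓ j)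
    (hmono : ∀ j, 1 ≤ j → ℓ j ≤ ℓ (j+1))
    (hsum2q : Summable (fun j : ℕ => ℓ (j+1) ^ (-(2*q))))
    (hsum2 : Summable (fun j : ℕ => ℓ (j+1) ^ (-(2:ℝ))))
    (ε : ℕ → ℝ) (hε : ∀ v, 0 < ε v)
    (hεℓ : Filter.Tendsto (fun v => ε v * ℓ v) Filter.atTop (nhds 0))
    (ζv : ℕ → ℝ → ℝ)
    (hζv : ∀ v s, ζv v s = ∑ j ∈ Finset.Icc 1 v, (ℓ j / (L + ε v * ℓ j)) ^ (-s))
    (D : ℕ → ℝ)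
    (hD : ∀ v, D v = (Real.log (ζv v (2*q)) - q * Real.log (ζv v 2)) / (1-q)) :
    Filter.Tendsto D Filter.atTop
      (nhds ((Real.log (∑' j : ℕ, ℓ (j+1) ^ (-(2*q)))
        - q * Real.log (∑' j : ℕ, ℓ (j+1) ^ (-(2:ℝ)))) / (1-q))) := by
  have hζ (s : ℝ) (hs : 0 < s) (hsum : Summable fun j : ℕ => ℓ (j + 1) ^ (-s)) :
      Tendsto (fun v => ζv v s) atTop (𝓝 (L ^ s * ∑' j : ℕ, ℓ (j + 1) ^ (-s))) := by
    simpa only [hζv] using tendsto_sum_Icc_div_add_mul_rpow_neg hL.le hs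
      (fun j hj => (hpos j hj).le) hmono (fun v => (hε v).le) hεℓ hsum
  have hζ_pos (s : ℝ) (hsum : Summable fun j : ℕ => ℓ (j + 1) ^ (-s)) :
      0 < ∑' j : ℕ, ℓ (j + 1) ^ (-s) :=
    hsum.tsum_pos (fun j => rpow_nonneg (hpos _ (Nat.le_add_left 1 j)).le _) 0
      (rpow_pos_of_pos (hpos 1 le_rfl) _)
  have hlog2q := (hζ _ (by linarith) hsum2q).log (mul_pos (by positivity) (hζ_pos _ hsum2q)).ne'
  have hlog2 := (hζ 2 two_pos hsum2).log (mul_pos (by positivity) (hζ_pos _ hsum2)).ne'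
  have hlim := (hlog2q.sub (hlog2.const_mul q)).div_const (1 - q)
  rw [log_rpow_mul_sub_mul_log_rpow_mul hL (hζ_pos _ hsum2q).ne' (hζ_pos _ hsum2).ne'] at hlim
  simpa only [← hD] using hlim

/-- the `v → ∞` limit of the ground-state fractal exponent
(Theorem 2.3, second part). The series `∑_{j=1}^∞ ℓ_j^{-s}` is written as a
`tsum` over `j : ℕ` of `ℓ (j+1) ^ (-s)`. -/
theorem ground_state_fractal_exponent_limit
    (q : ℝ) (hq : 1/2 < q) (hq1 : q ≠ 1) (L : ℝ) (hL : 0 < L)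
    (ℓ : ℕ → ℝ) (hpos : ∀ j, 1 ≤ j → 0 < ℓ j)
    (hmono : ∀ j, 1 ≤ j → ℓ j ≤ ℓ (j+1))
    (hsum2q : Summable (fun j : ℕ => ℓ (j+1) ^ (-(2*q))))
    (hsum2 : Summable (fun j : ℕ => ℓ (j+1) ^ (-(2:ℝ))))
    (ε : ℕ → ℝ) (hε : ∀ v, 0 < ε v)
    (hεℓ : Filter.Tendsto (fun v => ε v * ℓ v) Filter.atTop (nhds 0))
    (ζv : ℕ → ℝ → ℝ)
    (hζv : ∀ v s, ζv v s = ∑ j ∈ Finset.Icc 1 v, (ℓ j / (L + ε v * ℓ j)) ^ (-s))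
    (D : ℕ → ℝ)
    (hD : ∀ v, D v = (Real.log (ζv v (2*q)) - q * Real.log (ζv v 2)) / (1-q)) :
    Filter.Tendsto D Filter.atTop
      (nhds ((Real.log (∑' j : ℕ, ℓ (j+1) ^ (-(2*q)))
        - q * Real.log (∑' j : ℕ, ℓ (j+1) ^ (-(2:ℝ)))) / (1-q))) :=
  ground_state_fractal_exponent_limit_general q hq L hL ℓ hpos hmono hsum2q hsum2 ε hε hεℓ ζv hζv D
    hD
end

section
/- Let $q > 1/2$ be real with $q \ne 1$ and let $L > 0$. Taking $\ell_j = j$ and $\epsilon(v) = v^{-2}$, define $\zeta_{G,v}(s) = \sum_{j=1}^v \big(j/(L + v^{-2} j)\big)^{-s}$ and $D_q(v) = \frac{\log \zeta_{G,v}(2q) - q\,\log \zeta_{G,v}(2)}{1-q}$. Then $\lim_{v\to\infty} D_q(v) = \frac{\log\big(\sum_{n=1}^\infty n^{-2q}\big) - q\,\log\big(\pi^2/6\big)}{1-q}$; that is, the limiting fractal exponent is $\frac{\log\zeta(2q) - q\,\log\zeta(2)}{1-q}$ with $\zeta$ the Riemann zeta function. -/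
open Filter Real Finset

lemma aux_summable {s : ℝ} (hs : 1 < s) :
    Summable (fun n : ℕ => ((n:ℝ)+1) ^ (-s)) := by
  have h := (Real.summable_nat_rpow_inv (p := s)).mpr hs
  have h2 := h.comp_injective Nat.succ_injective
  refine h2.congr fun n => ?_
  simp [Function.comp, Real.rpow_neg (by positivity : (0:ℝ) ≤ (n:ℝ)+1)]

lemma aux_partial {s : ℝ} (hs : 1 < s) :
    Tendsto (fun v : ℕ => ∑ j ∈ Finset.Icc 1 v, ((j:ℝ)) ^ (-s)) atTop
      (nhds (∑' n : ℕ, ((n:ℝ)+1) ^ (-s))) := by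
  have h := (aux_summable hs).hasSum.tendsto_sum_nat
  refine h.congr fun v => ?_
  rw [← Finset.Ico_add_one_right_eq_Icc, Finset.sum_Ico_eq_sum_range]
  exact Finset.sum_congr (by norm_num) fun i _ => by push_cast; ring_nf

lemma aux_main {s L : ℝ} (hs : 1 < s) (hL : 0 < L) :
    Tendsto (fun v : ℕ => ∑ j ∈ Finset.Icc 1 v,
      ((j : ℝ) / (L + (v : ℝ) ^ (-(2:ℝ)) * j)) ^ (-s)) atTop
      (nhds (L ^ s * ∑' n : ℕ, ((n:ℝ)+1) ^ (-s))) := by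
  set Z := ∑' n : ℕ, ((n:ℝ)+1) ^ (-s) with hZ
  have hs0 : (0:ℝ) ≤ s := by linarith
  -- A v : lower bound, partial sums of L^s * j^{-s}
  have hA : Tendsto (fun v : ℕ => ∑ j ∈ Finset.Icc 1 v, L ^ s * ((j:ℝ)) ^ (-s)) atTop
      (nhds (L ^ s * Z)) := by
    simp only [← Finset.mul_sum]
    exact (aux_partial hs).const_mul _
  -- c v → 1
  have hc : Tendsto (fun v : ℕ => (1 + (L * v)⁻¹) ^ s) atTop (nhds 1) := by
    have h1 : Tendsto (fun v : ℕ => 1 + (L * v)⁻¹) atTop (nhds 1) := by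
      have : Tendsto (fun v : ℕ => (L * v)⁻¹) atTop (nhds 0) := by
        apply Tendsto.inv_tendsto_atTop
        exact (tendsto_natCast_atTop_atTop).const_mul_atTop hL
      simpa using tendsto_const_nhds.add this
    have := h1.rpow_const (p := s) (Or.inr hs0)
    simpa using this
  -- upper bound tendsto
  have hU : Tendsto (fun v : ℕ => (1 + (L * v)⁻¹) ^ s *
      ∑ j ∈ Finset.Icc 1 v, L ^ s * ((j:ℝ)) ^ (-s)) atTop (nhds (L ^ s * Z)) := by
    have := hc.mul hA
    simpa using this
  refine tendsto_of_tendsto_of_tendsto_of_le_of_le' hA hU ?_ ?_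
  · -- lower bound eventually
    filter_upwards [eventually_ge_atTop 1] with v hv
    apply Finset.sum_le_sum
    intro j hj
    simp only [Finset.mem_Icc] at hj
    have hj1 : (1:ℝ) ≤ j := by exact_mod_cast hj.1
    have hjpos : (0:ℝ) < j := by linarith
    have hvpos : (0:ℝ) < v := by exact_mod_cast lt_of_lt_of_le one_pos hv
    have hε : (0:ℝ) < (v:ℝ) ^ (-(2:ℝ)) := Real.rpow_pos_of_pos hvpos _
    have hd : (0:ℝ) < L + (v:ℝ) ^ (-(2:ℝ)) * j := by positivity
    have hbase : ((j:ℝ) / (L + (v:ℝ) ^ (-(2:ℝ)) * j)) ^ (-s)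
        = (L / j + (v:ℝ) ^ (-(2:ℝ))) ^ s := by
      rw [Real.rpow_neg (by positivity), ← Real.inv_rpow (by positivity)]
      congr 1
      rw [inv_div, add_div, mul_div_assoc, div_self hjpos.ne', mul_one]
    rw [hbase]
    have hLj : (0:ℝ) ≤ L / j := by positivity
    have : (L / (j:ℝ)) ^ s = L ^ s * ((j:ℝ)) ^ (-s) := by
      rw [Real.div_rpow hL.le hjpos.le, Real.rpow_neg hjpos.le, div_eq_mul_inv]
    rw [← this]
    exact Real.rpow_le_rpow hLj (by linarith [hε.le, le_refl (L/(j:ℝ))]) hs0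
  · -- upper bound eventually
    filter_upwards [eventually_ge_atTop 1] with v hv
    rw [Finset.mul_sum]
    apply Finset.sum_le_sum
    intro j hj
    simp only [Finset.mem_Icc] at hj
    have hj1 : (1:ℝ) ≤ j := by exact_mod_cast hj.1
    have hjv : (j:ℝ) ≤ v := by exact_mod_cast hj.2
    have hjpos : (0:ℝ) < j := by linarith
    have hvpos : (0:ℝ) < v := by exact_mod_cast lt_of_lt_of_le one_pos hv
    have hε : (0:ℝ) < (v:ℝ) ^ (-(2:ℝ)) := Real.rpow_pos_of_pos hvpos _
    have hd : (0:ℝ) < L + (v:ℝ) ^ (-(2:ℝ)) * j := by positivity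
    have hbase : ((j:ℝ) / (L + (v:ℝ) ^ (-(2:ℝ)) * j)) ^ (-s)
        = (L / j + (v:ℝ) ^ (-(2:ℝ))) ^ s := by
      rw [Real.rpow_neg (by positivity), ← Real.inv_rpow (by positivity)]
      congr 1
      rw [inv_div, add_div, mul_div_assoc, div_self hjpos.ne', mul_one]
    rw [hbase]
    have hεval : (v:ℝ) ^ (-(2:ℝ)) = ((v:ℝ)^2)⁻¹ := by
      rw [Real.rpow_neg hvpos.le, Real.rpow_two]
    have key : L / j + (v:ℝ) ^ (-(2:ℝ)) ≤ (L / j) * (1 + (L * v)⁻¹) := by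
      rw [hεval]
      have h1 : ((v:ℝ)^2)⁻¹ ≤ ((j:ℝ) * v)⁻¹ := by
        apply inv_anti₀ (by positivity)
        nlinarith
      have h2 : (L / j) * (1 + (L * v)⁻¹) = L / j + ((j:ℝ) * v)⁻¹ := by
        field_simp
      rw [h2]
      linarith
    calc (L / (j:ℝ) + (v:ℝ) ^ (-(2:ℝ))) ^ s
        ≤ ((L / j) * (1 + (L * v)⁻¹)) ^ s :=
          Real.rpow_le_rpow (by positivity) key hs0
      _ = (1 + (L * v)⁻¹) ^ s * (L ^ s * ((j:ℝ)) ^ (-s)) := by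
          rw [Real.mul_rpow (by positivity) (by positivity),
            Real.div_rpow hL.le hjpos.le, Real.rpow_neg hjpos.le, div_eq_mul_inv]
          ring


lemma aux_basel :
    HasSum (fun n : ℕ => ((n:ℝ)+1) ^ (-(2:ℝ))) (Real.pi ^ 2 / 6) := by
  have h0 : HasSum (fun n : ℕ => (1:ℝ) / ((n:ℝ)) ^ 2) (Real.pi ^ 2 / 6) := hasSum_zeta_two
  have h1 : HasSum (fun n : ℕ => (1:ℝ) / ((n+1:ℕ):ℝ) ^ 2) (Real.pi ^ 2 / 6) := by
    have h2 := (hasSum_nat_add_iff' (f := fun n : ℕ => (1:ℝ) / ((n:ℝ)) ^ 2) 1).mpr h0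
    simpa using h2
  refine HasSum.congr_fun h1 fun n => ?_
  rw [Real.rpow_neg (by positivity), Real.rpow_two, one_div]
  push_cast
  ring_nf

/-- specialization of Theorem 2.3 to the arithmetic star graph with
`ℓ_j = j` and `ε(v) = v^{-2}`; the limiting fractal exponent is
`(log ζ(2q) - q log ζ(2))/(1-q)` with `ζ` Riemann's zeta, `ζ(2) = π²/6`. -/
theorem ground_state_fractal_exponent_riemann_zeta
    (q : ℝ) (hq : 1/2 < q) (hq1 : q ≠ 1) (L : ℝ) (hL : 0 < L)
    (ζv : ℕ → ℝ → ℝ)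
    (hζv : ∀ v s, ζv v s = ∑ j ∈ Finset.Icc 1 v,
      ((j : ℝ) / (L + (v : ℝ) ^ (-(2:ℝ)) * j)) ^ (-s))
    (D : ℕ → ℝ)
    (hD : ∀ v, D v = (Real.log (ζv v (2*q)) - q * Real.log (ζv v 2)) / (1-q)) :
    Filter.Tendsto D Filter.atTop
      (nhds ((Real.log (∑' n : ℕ, ((n:ℝ)+1) ^ (-(2*q)))
        - q * Real.log (Real.pi^2/6)) / (1-q))) := by
  have h2q : (1:ℝ) < 2*q := by linarith
  set Zq := ∑' n : ℕ, ((n:ℝ)+1) ^ (-(2*q)) with hZq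
  have hZqpos : 0 < Zq := by
    refine Summable.tsum_pos (aux_summable h2q) (fun i => by positivity) 0 ?_
    norm_num
  have hZ2 : (∑' n : ℕ, ((n:ℝ)+1) ^ (-(2:ℝ))) = Real.pi ^ 2 / 6 := aux_basel.tsum_eq
  have hpi : (0:ℝ) < Real.pi ^ 2 / 6 := by positivity
  have T1 : Tendsto (fun v => ζv v (2*q)) atTop (nhds (L ^ (2*q) * Zq)) := by
    simpa [hζv] using aux_main (s := 2*q) (L := L) h2q hL
  have T2 : Tendsto (fun v => ζv v 2) atTop (nhds (L ^ (2:ℝ) * (Real.pi ^ 2 / 6))) := by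
    have := aux_main (s := (2:ℝ)) (L := L) one_lt_two hL
    rw [hZ2] at this
    simpa [hζv] using this
  have hP1 : (0:ℝ) < L ^ (2*q) * Zq := by
    have := Real.rpow_pos_of_pos hL (2*q); positivity
  have hP2 : (0:ℝ) < L ^ (2:ℝ) * (Real.pi ^ 2 / 6) := by
    have := Real.rpow_pos_of_pos hL (2:ℝ); positivity
  have TL1 : Tendsto (fun v => Real.log (ζv v (2*q))) atTop
      (nhds (Real.log (L ^ (2*q) * Zq))) := T1.log hP1.ne'
  have TL2 : Tendsto (fun v => Real.log (ζv v 2)) atTop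
      (nhds (Real.log (L ^ (2:ℝ) * (Real.pi ^ 2 / 6)))) := T2.log hP2.ne'
  have TD : Tendsto D atTop (nhds ((Real.log (L ^ (2*q) * Zq)
      - q * Real.log (L ^ (2:ℝ) * (Real.pi ^ 2 / 6))) / (1-q))) := by
    have := ((TL1.sub (TL2.const_mul q)).div_const (1-q))
    refine this.congr fun v => ?_
    rw [hD]
  convert TD using 2
  rw [Real.log_mul (Real.rpow_pos_of_pos hL _).ne' hZqpos.ne',
    Real.log_mul (Real.rpow_pos_of_pos hL _).ne' hpi.ne',
    Real.log_rpow hL, Real.log_rpow hL]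
  ring
end

section
/- Let $q \in \mathbb{C}$ with $q \ne 1$ and $q \ne -1/2$, suppose $2q \ne -n$ for every natural number $n$ and $2q \ne 1$, and suppose $\zeta(2q) \ne 0$ and $\varphi(2q) \ne 0$, where $\zeta$ is the Riemann zeta function and $\varphi(s) = 2\,(2\pi)^{-s}\,\Gamma(s)\,\cos(\pi s/2)$. Define $D_q = \frac{\log \zeta(2q) - q\,\log \zeta(2)}{1-q}$ using the principal complex logarithm. Then there exists an integer $k$ such that $\Big(\tfrac12 + q\Big) D_{1/2 - q} = (1-q)\,D_q + \log \varphi(2q) + \Big(2q - \tfrac12\Big)\log \zeta(2) + 2\pi i k.$ -/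
/-!
Apply the principal logarithm to the functional equation `ζ(1 - 2q) = φ(2q) ζ(2q)`: the logarithm
of the product is `log φ(2q) + log ζ(2q)` up to a multiple of `2πi`. Clearing the denominators of
`D_q` and `D_{1/2-q}` turns the claim into this identity.
-/

open Complex

/-- The factor `φ(s) = 2 (2π)^{-s} Γ(s) cos(πs/2)` in the functional equation
`ζ(1-s) = φ(s) ζ(s)` of Riemann's zeta function. -/
noncomputable def phiFE (s : ℂ) : ℂ :=
  2 * (2 * (Real.pi : ℂ)) ^ (-s) * Complex.Gamma s * Complex.cos ((Real.pi : ℂ) * s / 2)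

/-- The fractal exponent `D_q = (log ζ(2q) - q log ζ(2))/(1-q)` with the principal
complex logarithm. -/
noncomputable def fractalExponent (q : ℂ) : ℂ :=
  (Complex.log (riemannZeta (2 * q)) - q * Complex.log (riemannZeta 2)) / (1 - q)

theorem Complex.exists_log_mul_eq_log_add_log {x y : ℂ} (hx : x ≠ 0) (hy : y ≠ 0) :
    ∃ k : ℤ, log (x * y) = log x + log y + k * (2 * Real.pi * I) := by
  apply exp_eq_exp_iff_exists_int.mp
  rw [exp_add, exp_log (mul_ne_zero hx hy), exp_log hx, exp_log hy]

theorem riemannZeta_one_sub_eq_phiFE_mul {s : ℂ} (hs : ∀ n : ℕ, s ≠ -n) (hs' : s ≠ 1) :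
    riemannZeta (1 - s) = phiFE s * riemannZeta s :=
  riemannZeta_one_sub hs hs'

/-- At `q = 1` the junk value `x / 0 = 0` makes the left side `0`, and so is the right side. -/
theorem one_sub_mul_fractalExponent (q : ℂ) :
    (1 - q) * fractalExponent q = log (riemannZeta (2 * q)) - q * log (riemannZeta 2) := by
  rcases eq_or_ne q 1 with rfl | hq
  · simp [fractalExponent]
  · exact mul_div_cancel₀ _ (sub_ne_zero.mpr hq.symm)

theorem fractal_exponent_symmetry_general
    (q : ℂ)
    (hqn : ∀ n : ℕ, 2 * q ≠ -(n : ℂ)) (hq3 : 2 * q ≠ 1)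
    (hζ : riemannZeta (2 * q) ≠ 0) (hφ : phiFE (2 * q) ≠ 0) :
    ∃ k : ℤ, (1/2 + q) * fractalExponent (1/2 - q) =
      (1 - q) * fractalExponent q + Complex.log (phiFE (2 * q))
        + (2 * q - 1/2) * Complex.log (riemannZeta 2)
        + 2 * Real.pi * Complex.I * k := by
  obtain ⟨k, hk⟩ := exists_log_mul_eq_log_add_log hφ hζ
  refine ⟨k, ?_⟩
  have hlhs := one_sub_mul_fractalExponent (1/2 - q)
  rw [show (1 : ℂ) - (1/2 - q) = 1/2 + q by ring, show 2 * (1/2 - q) = 1 - 2 * q by ring] at hlhs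
  rw [hlhs, one_sub_mul_fractalExponent, riemannZeta_one_sub_eq_phiFE_mul hqn hq3, hk]
  ring

/-- the symmetry relation of the fractal exponent around `q = 1/4`
under `q ↦ 1/2 - q`, up to an integer multiple of `2πi` from branch ambiguity. -/
theorem fractal_exponent_symmetry
    (q : ℂ) (hq1 : q ≠ 1) (hq2 : q ≠ -1/2)
    (hqn : ∀ n : ℕ, 2 * q ≠ -(n : ℂ)) (hq3 : 2 * q ≠ 1)
    (hζ : riemannZeta (2 * q) ≠ 0) (hφ : phiFE (2 * q) ≠ 0) :
    ∃ k : ℤ, (1/2 + q) * fractalExponent (1/2 - q) =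
      (1 - q) * fractalExponent q + Complex.log (phiFE (2 * q))
        + (2 * q - 1/2) * Complex.log (riemannZeta 2)
        + 2 * Real.pi * Complex.I * k :=
  fractal_exponent_symmetry_general q hqn hq3 hζ hφ
end

section
/- Let $n \ge 3$ be an integer, let $q > n/2$ be real, and let $\sigma \ge 0$. Define the moment sums $M_q(v) = \sum_{j=1}^v \big(\sigma + j^{1/n}\big)^{-2q}$. Then $\lim_{v\to\infty} \frac{\log M_q(v) - q\,\log M_1(v)}{(1-q)\,\log v} = 1 - \frac{2q-n}{n(q-1)}.$ -/
/-!
Let `S_p(v) = ∑_{j ≤ v} (σ + j^s)^{-p}`, so that `M_q = S_{2q}` with `s = 1/n`. If `s p > 1` the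
series converges, so `S_p(v)` stays between its first term and its sum and `log S_p(v) = o(log v)`.
If `s p < 1`, every term lies between `((σ + 1) v^s)^{-p}` and `j^{-sp}`, and comparing
`∑_{j ≤ v} j^{-sp}` with the telescoping sum of `j^{1-sp} - (j-1)^{1-sp}` (Bernoulli's inequality)
gives `S_p(v) ≍ v^{1-sp}`, so `log S_p(v) / log v → 1 - sp`. For `q > n/2 ≥ 3/2` the moment `M_q` is
in the first case and `M_1` in the second, and the limit is `-q (1 - 2/n) / (1 - q)`.
-/

open Filter Real Finset Topology

lemma tendsto_log_const_mul_rpow_div_log {K : ℝ} (hK : 0 < K) (b : ℝ) :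
    Tendsto (fun v : ℕ => log (K * (v : ℝ) ^ b) / log v) atTop (𝓝 b) := by
  have hlog : Tendsto (fun v : ℕ => log (v : ℝ)) atTop atTop :=
    tendsto_log_atTop.comp tendsto_natCast_atTop_atTop
  have hlim : Tendsto (fun v : ℕ => log K / log v + b) atTop (𝓝 b) := by
    simpa using (tendsto_const_nhds.div_atTop hlog).add_const b
  refine hlim.congr' ?_
  filter_upwards [eventually_ge_atTop 2] with v hv
  have hv : (1 : ℝ) < v := by exact_mod_cast hv
  have hlogv : log (v : ℝ) ≠ 0 := (log_pos hv).ne'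
  rw [log_mul hK.ne' (rpow_pos_of_pos (by linarith) b).ne', log_rpow (by linarith)]
  field_simp

lemma tendsto_log_div_log_of_le_of_le {f : ℕ → ℝ} {b c C : ℝ} (hc : 0 < c) (hC : 0 < C)
    (hlow : ∀ᶠ v : ℕ in atTop, c * (v : ℝ) ^ b ≤ f v)
    (hupp : ∀ᶠ v : ℕ in atTop, f v ≤ C * (v : ℝ) ^ b) :
    Tendsto (fun v : ℕ => log (f v) / log v) atTop (𝓝 b) := by
  have hpos : ∀ᶠ v : ℕ in atTop, 0 < c * (v : ℝ) ^ b := by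
    filter_upwards [eventually_ge_atTop 1] with v hv
    exact mul_pos hc (rpow_pos_of_pos (by exact_mod_cast hv) b)
  refine tendsto_of_tendsto_of_tendsto_of_le_of_le' (tendsto_log_const_mul_rpow_div_log hc b)
    (tendsto_log_const_mul_rpow_div_log hC b) ?_ ?_
  · filter_upwards [hlow, hpos] with v hlow hpos
    exact div_le_div_of_nonneg_right (log_le_log hpos hlow) (log_natCast_nonneg v)
  · filter_upwards [hlow, hupp, hpos] with v hlow hupp hpos
    exact div_le_div_of_nonneg_right (log_le_log (hpos.trans_le hlow) hupp) (log_natCast_nonneg v)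

lemma mul_rpow_neg_le_rpow_sub_rpow {a x : ℝ} (ha0 : 0 ≤ a) (ha1 : a ≤ 1) (hx : 1 ≤ x) :
    (1 - a) * x ^ (-a) ≤ x ^ (1 - a) - (x - 1) ^ (1 - a) := by
  have hx0 : 0 < x := by linarith
  have hbern : (1 + -x⁻¹) ^ (1 - a) ≤ 1 + (1 - a) * -x⁻¹ :=
    rpow_one_add_le_one_add_mul_self (by rw [neg_le_neg_iff]; exact inv_le_one_of_one_le₀ hx)
      (by linarith) (by linarith)
  have hsplit : (x - 1) ^ (1 - a) = x ^ (1 - a) * (1 + -x⁻¹) ^ (1 - a) := by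
    rw [← mul_rpow hx0.le (by simp [inv_le_one_of_one_le₀ hx])]
    congr 1
    field_simp
    ring
  have hneg : x ^ (-a) = x ^ (1 - a) * x⁻¹ := by
    rw [← div_eq_mul_inv, ← rpow_sub_one hx0.ne']
    ring_nf
  rw [hsplit, hneg]
  nlinarith [rpow_pos_of_pos hx0 (1 - a)]

lemma sum_Icc_rpow_neg_le {a : ℝ} (ha0 : 0 ≤ a) (ha1 : a < 1) (v : ℕ) :
    ∑ j ∈ Icc 1 v, (j : ℝ) ^ (-a) ≤ (1 - a)⁻¹ * (v : ℝ) ^ (1 - a) := by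
  rw [← div_le_iff₀' (inv_pos.2 (by linarith)), div_inv_eq_mul, mul_comm, mul_sum]
  induction v with
  | zero => simp [zero_rpow (by linarith : 1 - a ≠ 0)]
  | succ v ih =>
    rw [sum_Icc_succ_top (by omega)]
    have hstep := mul_rpow_neg_le_rpow_sub_rpow ha0 ha1.le
      (by exact_mod_cast Nat.le_add_left 1 v : (1 : ℝ) ≤ ((v + 1 : ℕ) : ℝ))
    push_cast at hstep ⊢
    rw [add_sub_cancel_right] at hstep
    linarith

noncomputable def momentTerm (σ s p x : ℝ) : ℝ := (σ + x ^ s) ^ (-p)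

/-- With `ℓ_j = j^s`, the paper's moment `M_q(v)` is `momentSum σ s (2 * q) v`. -/
noncomputable def momentSum (σ s p : ℝ) (v : ℕ) : ℝ := ∑ j ∈ Icc 1 v, momentTerm σ s p j

section Moments

variable {σ s p : ℝ}

lemma momentTerm_nonneg (hσ : 0 ≤ σ) {x : ℝ} (hx : 0 ≤ x) : 0 ≤ momentTerm σ s p x :=
  rpow_nonneg (add_nonneg hσ (rpow_nonneg hx s)) _

lemma momentTerm_pos (hσ : 0 ≤ σ) {x : ℝ} (hx : 0 < x) : 0 < momentTerm σ s p x :=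
  rpow_pos_of_pos (add_pos_of_nonneg_of_pos hσ (rpow_pos_of_pos hx s)) _

lemma momentTerm_le_rpow (hσ : 0 ≤ σ) (hp : 0 ≤ p) {x : ℝ} (hx : 0 < x) :
    momentTerm σ s p x ≤ x ^ (-(s * p)) := by
  calc momentTerm σ s p x ≤ (x ^ s) ^ (-p) :=
        rpow_le_rpow_of_nonpos (rpow_pos_of_pos hx s) (le_add_of_nonneg_left hσ) (by linarith)
    _ = x ^ (-(s * p)) := by rw [← rpow_mul hx.le, mul_neg]

lemma momentTerm_ge (hσ : 0 ≤ σ) (hs : 0 ≤ s) (hp : 0 ≤ p) {x y : ℝ} (hx : 0 < x)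
    (hxy : x ≤ y) (hy : 1 ≤ y) : (σ + 1) ^ (-p) * y ^ (-(s * p)) ≤ momentTerm σ s p x := by
  have hys : 1 ≤ y ^ s := one_le_rpow hy hs
  have hbound : σ + x ^ s ≤ (σ + 1) * y ^ s := by
    nlinarith [rpow_le_rpow hx.le hxy hs]
  calc (σ + 1) ^ (-p) * y ^ (-(s * p)) = ((σ + 1) * y ^ s) ^ (-p) := by
        rw [mul_rpow (by linarith) (by linarith), ← rpow_mul (by linarith), mul_neg]
    _ ≤ momentTerm σ s p x :=
        rpow_le_rpow_of_nonpos (add_pos_of_nonneg_of_pos hσ (rpow_pos_of_pos hx s)) hbound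
          (by linarith)

lemma momentSum_le (hσ : 0 ≤ σ) (hp : 0 ≤ p) (hsp0 : 0 ≤ s * p) (hsp1 : s * p < 1) (v : ℕ) :
    momentSum σ s p v ≤ (1 - s * p)⁻¹ * (v : ℝ) ^ (1 - s * p) :=
  calc momentSum σ s p v ≤ ∑ j ∈ Icc 1 v, (j : ℝ) ^ (-(s * p)) :=
        sum_le_sum fun j hj => momentTerm_le_rpow hσ hp
          (by exact_mod_cast (mem_Icc.1 hj).1)
    _ ≤ _ := sum_Icc_rpow_neg_le hsp0 hsp1 v

lemma momentSum_ge (hσ : 0 ≤ σ) (hs : 0 ≤ s) (hp : 0 ≤ p) {v : ℕ} (hv : 1 ≤ v) :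
    (σ + 1) ^ (-p) * (v : ℝ) ^ (1 - s * p) ≤ momentSum σ s p v := by
  have hvR : (1 : ℝ) ≤ v := by exact_mod_cast hv
  have hterm : ∀ j ∈ Icc 1 v, (σ + 1) ^ (-p) * (v : ℝ) ^ (-(s * p)) ≤ momentTerm σ s p j :=
    fun j hj => momentTerm_ge hσ hs hp (by exact_mod_cast (mem_Icc.1 hj).1)
      (by exact_mod_cast (mem_Icc.1 hj).2) hvR
  calc (σ + 1) ^ (-p) * (v : ℝ) ^ (1 - s * p)
        = v * ((σ + 1) ^ (-p) * (v : ℝ) ^ (-(s * p))) := by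
          rw [sub_eq_add_neg, rpow_add (by linarith), rpow_one]
          ring
    _ ≤ momentSum σ s p v := by
      simpa [momentSum] using card_nsmul_le_sum _ _ _ hterm

lemma summable_momentTerm (hσ : 0 ≤ σ) (hp : 0 ≤ p) (hsp : 1 < s * p) :
    Summable fun j : ℕ => momentTerm σ s p j := by
  rw [← summable_nat_add_iff 1]
  refine Summable.of_nonneg_of_le (fun j => momentTerm_nonneg hσ (by positivity))
    (fun j => momentTerm_le_rpow hσ hp (by positivity)) ?_
  exact_mod_cast (summable_nat_add_iff 1).2 (summable_nat_rpow.2 (by linarith))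

lemma tendsto_log_momentSum_div_log_of_lt_one (hσ : 0 ≤ σ) (hs : 0 ≤ s) (hp : 0 ≤ p)
    (hsp : s * p < 1) :
    Tendsto (fun v : ℕ => log (momentSum σ s p v) / log v) atTop (𝓝 (1 - s * p)) :=
  tendsto_log_div_log_of_le_of_le (rpow_pos_of_pos (by linarith) _) (by simpa using hsp)
    (eventually_atTop.2 ⟨1, fun _ hv => momentSum_ge hσ hs hp hv⟩)
    (Eventually.of_forall (momentSum_le hσ hp (mul_nonneg hs hp) hsp))

lemma tendsto_log_momentSum_div_log_of_one_lt (hσ : 0 ≤ σ) (hp : 0 ≤ p) (hsp : 1 < s * p) :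
    Tendsto (fun v : ℕ => log (momentSum σ s p v) / log v) atTop (𝓝 0) := by
  have hsum := summable_momentTerm hσ hp hsp
  refine tendsto_log_div_log_of_le_of_le (momentTerm_pos (s := s) (p := p) hσ one_pos)
    (hsum.tsum_pos (fun j => momentTerm_nonneg hσ j.cast_nonneg) 1 (momentTerm_pos hσ (by simp)))
    ?_ (Eventually.of_forall fun v => ?_)
  · filter_upwards [eventually_ge_atTop 1] with v hv
    simpa [momentSum] using single_le_sum (fun j _ => momentTerm_nonneg hσ (Nat.cast_nonneg j))
      (mem_Icc.2 ⟨le_rfl, hv⟩)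
  · simpa [momentSum] using
      hsum.sum_le_tsum (Icc 1 v) (fun j _ => momentTerm_nonneg hσ j.cast_nonneg)

end Moments

/-- Corollary 2.2 for `ℓ_j = j^{1/n}`, `n ≥ 3`: the fractal exponent
is `1 - (2q-n)/(n(q-1))`. -/
theorem fractal_exponent_power_law
    (n : ℕ) (hn : 3 ≤ n) (q : ℝ) (hq : (n:ℝ)/2 < q) (σ : ℝ) (hσ : 0 ≤ σ)
    (M : ℝ → ℕ → ℝ)
    (hM : ∀ p v, M p v = ∑ j ∈ Finset.Icc 1 v,
      (σ + (j:ℝ) ^ ((1:ℝ)/n)) ^ (-(2*p))) :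
    Filter.Tendsto (fun v : ℕ =>
        (Real.log (M q v) - q * Real.log (M 1 v)) / ((1-q) * Real.log v))
      Filter.atTop (nhds (1 - (2*q - n)/(n*(q-1)))) := by
  have hn3 : (3 : ℝ) ≤ n := by exact_mod_cast hn
  have hq1 : 1 < q := by linarith
  have hM' : ∀ p, M p = momentSum σ (1 / n) (2 * p) := fun p => funext (hM p)
  have hsq : 1 < 1 / (n : ℝ) * (2 * q) := by
    rw [one_div_mul_eq_div, one_lt_div (by linarith)]
    linarith
  have hs1 : 1 / (n : ℝ) * (2 * 1) < 1 := by
    rw [one_div_mul_eq_div, div_lt_one (by linarith)]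
    linarith
  have hMq := tendsto_log_momentSum_div_log_of_one_lt hσ (by linarith) hsq
  have hM1 := tendsto_log_momentSum_div_log_of_lt_one hσ (by positivity) (by norm_num) hs1
  rw [← hM'] at hMq hM1
  have hlim : (0 - q * (1 - 1 / (n : ℝ) * (2 * 1))) / (1 - q) =
      1 - (2 * q - n) / (n * (q - 1)) := by
    field_simp [sub_ne_zero.2 hq1.ne, sub_ne_zero.2 hq1.ne']
    ring
  refine hlim ▸ ((hMq.sub (hM1.const_mul q)).div_const (1 - q)).congr fun v => ?_
  rw [mul_comm (1 - q), ← div_div]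
  ring
end

section
/- Let $q > 1$ be real and let $\sigma \ge 0$. Define the moment sums $M_q(v) = \sum_{j=1}^v \big(\sigma + \sqrt{j}\big)^{-2q}$. Then $\lim_{v\to\infty} \frac{\log M_q(v) - q\,\log M_1(v)}{(1-q)\,\log\log v} = \frac{q}{q-1}.$ -/
open Filter Real Finset

private lemma sqrt_rpow_neg_two_mul (p : ℝ) (j : ℕ) :
    (Real.sqrt j) ^ (-(2*p)) = (j:ℝ) ^ (-p) := by
  rw [Real.sqrt_eq_rpow, ← Real.rpow_mul (Nat.cast_nonneg j)]
  congr 1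
  ring

/-- Corollary 2.2 for `n = 2` (`ℓ_j = √j`): the Renyi entropy is
asymptotic to `(q/(q-1)) log log v`. -/
theorem renyi_entropy_sqrt_loglog
    (q : ℝ) (hq : 1 < q) (σ : ℝ) (hσ : 0 ≤ σ)
    (M : ℝ → ℕ → ℝ)
    (hM : ∀ p v, M p v = ∑ j ∈ Finset.Icc 1 v,
      (σ + Real.sqrt j) ^ (-(2*p))) :
    Filter.Tendsto (fun v : ℕ =>
        (Real.log (M q v) - q * Real.log (M 1 v)) / ((1-q) * Real.log (Real.log v)))
      Filter.atTop (nhds (q/(q-1))) := by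
  have h1q : (1:ℝ) - q ≠ 0 := by linarith
  have hsqrt1 : ∀ j : ℕ, 1 ≤ j → (1:ℝ) ≤ Real.sqrt j := by
    intro j hj
    rw [Real.one_le_sqrt]
    exact_mod_cast hj
  have hpos : ∀ j : ℕ, 1 ≤ j → 0 < σ + Real.sqrt j := by
    intro j hj
    have := hsqrt1 j hj
    linarith
  -- log log v → ∞
  have hLtop : Tendsto (fun v : ℕ => Real.log (Real.log v)) atTop atTop :=
    (Real.tendsto_log_atTop.comp Real.tendsto_log_atTop).comp
      tendsto_natCast_atTop_atTop
  -- Part 1 : M q converges to a positive limit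
  have hsum : Summable (fun i : ℕ => (σ + Real.sqrt (1 + i : ℕ)) ^ (-(2*q))) := by
    have hmaj : Summable (fun i : ℕ => ((1 + i : ℕ) : ℝ) ^ (-q)) := by
      have h0 : Summable (fun n : ℕ => (n : ℝ) ^ (-q)) :=
        Real.summable_nat_rpow.mpr (by linarith)
      have := (summable_nat_add_iff 1).mpr h0
      simpa [add_comm] using this
    refine Summable.of_nonneg_of_le (fun i => Real.rpow_nonneg (hpos _ (by omega)).le _)
      (fun i => ?_) hmaj
    have hc : (0:ℝ) < Real.sqrt ((1 + i : ℕ) : ℝ) := by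
      have := hsqrt1 (1+i) (by omega); linarith
    calc (σ + Real.sqrt (1 + i : ℕ)) ^ (-(2*q))
        ≤ (Real.sqrt ((1 + i : ℕ) : ℝ)) ^ (-(2*q)) :=
          Real.rpow_le_rpow_of_nonpos hc (by linarith) (by linarith)
      _ = ((1 + i : ℕ) : ℝ) ^ (-q) := sqrt_rpow_neg_two_mul q _
  set Lq : ℝ := ∑' i : ℕ, (σ + Real.sqrt (1 + i : ℕ)) ^ (-(2*q)) with hLq
  have hLqpos : 0 < Lq :=
    Summable.tsum_pos hsum (fun i => Real.rpow_nonneg (hpos _ (by omega)).le _) 0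
      (Real.rpow_pos_of_pos (hpos 1 le_rfl) _)
  have hMqt : Tendsto (fun v => M q v) atTop (nhds Lq) := by
    have h := hsum.hasSum.tendsto_sum_nat
    refine h.congr fun v => ?_
    rw [hM q v, ← Finset.Ico_add_one_right_eq_Icc, Finset.sum_Ico_eq_sum_range]
    simp
  have hlogMq : Tendsto (fun v => Real.log (M q v)) atTop (nhds (Real.log Lq)) :=
    ((Real.continuousAt_log (ne_of_gt hLqpos)).tendsto.comp hMqt)
  -- Part 2 : bounds on M 1
  set A : ℝ := (σ + 1) ^ (-(2*(1:ℝ))) with hA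
  have hApos : 0 < A := Real.rpow_pos_of_pos (by linarith) _
  have hharm : ∀ v : ℕ, ((harmonic v : ℚ) : ℝ) = ∑ j ∈ Finset.Icc 1 v, ((j:ℝ))⁻¹ := by
    intro v
    rw [harmonic_eq_sum_Icc]
    push_cast
    rfl
  have hterm_eq : ∀ j : ℕ, 1 ≤ j →
      (Real.sqrt j) ^ (-(2*(1:ℝ))) = ((j:ℝ))⁻¹ := by
    intro j hj
    rw [sqrt_rpow_neg_two_mul, Real.rpow_neg_one]
  have hMu : ∀ v : ℕ, M 1 v ≤ ((harmonic v : ℚ) : ℝ) := by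
    intro v
    rw [hM 1 v, hharm v]
    refine Finset.sum_le_sum fun j hj => ?_
    have hj1 : 1 ≤ j := (Finset.mem_Icc.mp hj).1
    have hc : (0:ℝ) < Real.sqrt j := by have := hsqrt1 j hj1; linarith
    calc (σ + Real.sqrt j) ^ (-(2*(1:ℝ)))
        ≤ (Real.sqrt j) ^ (-(2*(1:ℝ))) :=
          Real.rpow_le_rpow_of_nonpos hc (by linarith) (by norm_num)
      _ = ((j:ℝ))⁻¹ := hterm_eq j hj1
  have hMl : ∀ v : ℕ, A * ((harmonic v : ℚ) : ℝ) ≤ M 1 v := by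
    intro v
    rw [hM 1 v, hharm v, Finset.mul_sum]
    refine Finset.sum_le_sum fun j hj => ?_
    have hj1 : 1 ≤ j := (Finset.mem_Icc.mp hj).1
    have hs1 := hsqrt1 j hj1
    have hle : σ + Real.sqrt j ≤ (σ + 1) * Real.sqrt j := by nlinarith
    calc A * ((j:ℝ))⁻¹
        = ((σ + 1) * Real.sqrt j) ^ (-(2*(1:ℝ))) := by
          rw [Real.mul_rpow (by linarith) (Real.sqrt_nonneg _), hterm_eq j hj1]
      _ ≤ (σ + Real.sqrt j) ^ (-(2*(1:ℝ))) :=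
          Real.rpow_le_rpow_of_nonpos (hpos j hj1) hle (by norm_num)
  -- eventual sandwich on log (M 1 v)
  have hkey : ∀ᶠ v : ℕ in atTop,
      Real.log A + Real.log (Real.log v) ≤ Real.log (M 1 v) ∧
      Real.log (M 1 v) ≤ Real.log 2 + Real.log (Real.log v) := by
    filter_upwards [eventually_ge_atTop 3] with v hv
    have hv3 : (3:ℝ) ≤ (v:ℝ) := by exact_mod_cast hv
    have hlogv : 1 ≤ Real.log v := by
      have he : Real.exp 1 ≤ (v:ℝ) := by
        have := Real.exp_one_lt_d9
        linarith
      calc (1:ℝ) = Real.log (Real.exp 1) := (Real.log_exp 1).symm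
        _ ≤ Real.log v := Real.log_le_log (Real.exp_pos 1) he
    have hHl : Real.log v ≤ ((harmonic v : ℚ) : ℝ) := by
      calc Real.log v ≤ Real.log ((v:ℕ)+1 : ℕ) := by
            apply Real.log_le_log (by linarith)
            push_cast; linarith
        _ ≤ ((harmonic v : ℚ) : ℝ) := log_add_one_le_harmonic v
    have hHu : ((harmonic v : ℚ) : ℝ) ≤ 2 * Real.log v := by
      calc ((harmonic v : ℚ) : ℝ) ≤ 1 + Real.log v := harmonic_le_one_add_log v
        _ ≤ 2 * Real.log v := by linarith
    have hHpos : 0 < ((harmonic v : ℚ) : ℝ) := by linarith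
    constructor
    · calc Real.log A + Real.log (Real.log v)
          = Real.log (A * Real.log v) := (Real.log_mul (ne_of_gt hApos) (by linarith)).symm
        _ ≤ Real.log (A * ((harmonic v : ℚ) : ℝ)) := by
            apply Real.log_le_log (by positivity)
            exact mul_le_mul_of_nonneg_left hHl hApos.le
        _ ≤ Real.log (M 1 v) :=
            Real.log_le_log (by positivity) (hMl v)
    · calc Real.log (M 1 v) ≤ Real.log ((harmonic v : ℚ) : ℝ) := by
            apply Real.log_le_log _ (hMu v)
            calc (0:ℝ) < A * ((harmonic v : ℚ) : ℝ) := by positivity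
              _ ≤ M 1 v := hMl v
        _ ≤ Real.log (2 * Real.log v) := Real.log_le_log hHpos (by linarith)
        _ = Real.log 2 + Real.log (Real.log v) :=
            Real.log_mul (by norm_num) (by linarith)
  -- the two normalized limits
  have g1 : Tendsto (fun v : ℕ => Real.log (M q v) / Real.log (Real.log v))
      atTop (nhds 0) := hlogMq.div_atTop hLtop
  have g2 : Tendsto (fun v : ℕ => Real.log (M 1 v) / Real.log (Real.log v))
      atTop (nhds 1) := by
    have hl : Tendsto (fun v : ℕ => Real.log A / Real.log (Real.log v) + 1)
        atTop (nhds 1) := by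
      have := (tendsto_const_nhds (x := Real.log A)).div_atTop hLtop
      simpa using this.add (tendsto_const_nhds (x := (1:ℝ)))
    have hu : Tendsto (fun v : ℕ => Real.log 2 / Real.log (Real.log v) + 1)
        atTop (nhds 1) := by
      have := (tendsto_const_nhds (x := Real.log 2)).div_atTop hLtop
      simpa using this.add (tendsto_const_nhds (x := (1:ℝ)))
    refine tendsto_of_tendsto_of_tendsto_of_le_of_le' hl hu ?_ ?_
    · filter_upwards [hkey, hLtop.eventually_gt_atTop 0] with v hv hL
      have h1 : Real.log A / Real.log (Real.log v) + 1
          = (Real.log A + Real.log (Real.log v)) / Real.log (Real.log v) := by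
        field_simp
      rw [h1]
      gcongr
      exact hv.1
    · filter_upwards [hkey, hLtop.eventually_gt_atTop 0] with v hv hL
      have h1 : Real.log 2 / Real.log (Real.log v) + 1
          = (Real.log 2 + Real.log (Real.log v)) / Real.log (Real.log v) := by
        field_simp
      rw [h1]
      gcongr
      exact hv.2
  -- final assembly
  have hmain : Tendsto (fun v : ℕ =>
      (Real.log (M q v) / Real.log (Real.log v)
        - q * (Real.log (M 1 v) / Real.log (Real.log v))) * (1-q)⁻¹)
      atTop (nhds ((0 - q * 1) * (1-q)⁻¹)) :=
    ((g1.sub (g2.const_mul q)).mul_const _)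
  have hval : (0 - q * 1) * (1-q)⁻¹ = q / (q-1) := by
    have h2 : q - 1 ≠ 0 := by linarith
    field_simp
    ring
  rw [hval] at hmain
  refine hmain.congr fun v => ?_
  by_cases hL : Real.log (Real.log v) = 0
  · simp [hL]
  · field_simp
end

section
/- Let $q > 1$ be real and let $\sigma \ge 0$. Define the moment sums $M_q(v) = \sum_{j=1}^v \big(\sigma + \sqrt{j}\big)^{-2q}$. Then $\lim_{v\to\infty} \frac{\log M_q(v) - q\,\log M_1(v)}{(1-q)\,\log v} = 0.$ -/
/-!
Since `(σ + √j) ^ (-2p) ≤ j ^ (-p)`, the moment sum `M_q(v)` for `q > 1` is an increasing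
sequence bounded by `ζ(q)`, so it converges to a positive limit and `log M_q(v) = O(1)`.
For `q = 1` the sum lies between its first term `(σ + 1)⁻²` and the harmonic number
`H_v ≤ 1 + log v`, so `log M_1(v) = O(log log v)`. Both are `o(log v)`.
-/

open Filter Real Finset Asymptotics Topology

theorem tendsto_log_one_add_div_atTop :
    Tendsto (fun x : ℝ => log (1 + x) / x) atTop (𝓝 0) := by
  have hlog : (fun x : ℝ => log (1 + x)) =o[atTop] fun x => 1 + x :=
    isLittleO_log_id_atTop.comp_tendsto (tendsto_atTop_add_const_left _ 1 tendsto_id)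
  have hlin : (fun x : ℝ => 1 + x) =O[atTop] id :=
    (isLittleO_const_id_atTop (1 : ℝ)).isBigO.add (isBigO_refl id atTop)
  exact (hlog.trans_isBigO hlin).tendsto_div_nhds_zero

theorem tendsto_log_div_of_le_one_add {α : Type*} {l : Filter α} {a u : α → ℝ} {c : ℝ}
    (hc : 0 < c) (hu : Tendsto u l atTop) (hlow : ∀ᶠ x in l, c ≤ a x)
    (hup : ∀ᶠ x in l, a x ≤ 1 + u x) :
    Tendsto (fun x => log (a x) / u x) l (𝓝 0) := by
  refine tendsto_of_tendsto_of_tendsto_of_le_of_le'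
    ((tendsto_const_nhds (x := log c)).div_atTop hu) (tendsto_log_one_add_div_atTop.comp hu) ?_ ?_
  all_goals
    filter_upwards [hlow, hup, hu.eventually_gt_atTop 0] with x hca hau hux
    refine div_le_div_of_nonneg_right ?_ hux.le
  · exact log_le_log hc hca
  · exact log_le_log (hc.trans_le hca) hau

theorem rpow_neg_two_mul_add_sqrt_le {σ x p : ℝ} (hσ : 0 ≤ σ) (hx : 0 < x) (hp : 0 ≤ p) :
    (σ + √x) ^ (-(2 * p)) ≤ x ^ (-p) := calc
  (σ + √x) ^ (-(2 * p)) ≤ √x ^ (-(2 * p)) :=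
    rpow_le_rpow_of_nonpos (sqrt_pos.mpr hx) (le_add_of_nonneg_left hσ) (by linarith)
  _ = x ^ (-p) := by
    rw [sqrt_eq_rpow, ← rpow_mul hx.le]
    ring_nf

/-- The moment sum `M_p(v)` of the star graph with edge lengths `σ + √j`. -/
noncomputable def sqrtMoment (σ p : ℝ) (v : ℕ) : ℝ :=
  ∑ j ∈ Icc 1 v, (σ + √j) ^ (-(2 * p))

namespace sqrtMoment

variable {σ : ℝ}

theorem term_pos (hσ : 0 ≤ σ) (p : ℝ) {v j : ℕ} (hj : j ∈ Icc 1 v) :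
    0 < (σ + √j) ^ (-(2 * p)) := by
  have hj : (0 : ℝ) < j := by exact_mod_cast (mem_Icc.mp hj).1
  exact rpow_pos_of_pos (add_pos_of_nonneg_of_pos hσ (sqrt_pos.mpr hj)) _

theorem first_term_le (hσ : 0 ≤ σ) (p : ℝ) {v : ℕ} (hv : 1 ≤ v) :
    (σ + 1) ^ (-(2 * p)) ≤ sqrtMoment σ p v := by
  simpa [sqrtMoment] using single_le_sum (fun j hj => (term_pos hσ p hj).le) (left_mem_Icc.mpr hv)

theorem monotone (hσ : 0 ≤ σ) (p : ℝ) : Monotone (sqrtMoment σ p) := fun _ _ hvw =>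
  sum_le_sum_of_subset_of_nonneg (Icc_subset_Icc_right hvw) fun _ hj _ => (term_pos hσ p hj).le

theorem le_tsum_rpow_neg (hσ : 0 ≤ σ) {p : ℝ} (hp : 1 < p) (v : ℕ) :
    sqrtMoment σ p v ≤ ∑' n : ℕ, (n : ℝ) ^ (-p) := calc
  sqrtMoment σ p v ≤ ∑ j ∈ Icc 1 v, (j : ℝ) ^ (-p) := sum_le_sum fun j hj =>
    rpow_neg_two_mul_add_sqrt_le hσ (by exact_mod_cast (mem_Icc.mp hj).1) (by linarith)
  _ ≤ ∑' n : ℕ, (n : ℝ) ^ (-p) :=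
    Summable.sum_le_tsum _ (fun n _ => rpow_nonneg n.cast_nonneg _)
      (summable_nat_rpow.mpr (by linarith))

theorem exists_tendsto_pos (hσ : 0 ≤ σ) {p : ℝ} (hp : 1 < p) :
    ∃ L, 0 < L ∧ Tendsto (sqrtMoment σ p) atTop (𝓝 L) := by
  have hbdd : BddAbove (Set.range (sqrtMoment σ p)) :=
    ⟨_, Set.forall_mem_range.mpr (le_tsum_rpow_neg hσ hp)⟩
  refine ⟨⨆ v, sqrtMoment σ p v, ?_, tendsto_atTop_ciSup (monotone hσ p) hbdd⟩
  calc (0 : ℝ) < (σ + 1) ^ (-(2 * p)) := rpow_pos_of_pos (by linarith) _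
    _ ≤ sqrtMoment σ p 1 := first_term_le hσ p le_rfl
    _ ≤ ⨆ v, sqrtMoment σ p v := le_ciSup hbdd 1

theorem le_one_add_log (hσ : 0 ≤ σ) (v : ℕ) : sqrtMoment σ 1 v ≤ 1 + log v := calc
  sqrtMoment σ 1 v ≤ ∑ j ∈ Icc 1 v, (j : ℝ)⁻¹ := sum_le_sum fun j hj => by
    simpa [rpow_neg_one] using
      rpow_neg_two_mul_add_sqrt_le hσ (by exact_mod_cast (mem_Icc.mp hj).1) zero_le_one
  _ = harmonic v := by simp [harmonic_eq_sum_Icc]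
  _ ≤ 1 + log v := harmonic_le_one_add_log v

end sqrtMoment

/-- Corollary 2.2 for `n = 2` (`ℓ_j = √j`): the fractal exponent
`D_q = lim H_q / log v` vanishes. -/
theorem fractal_exponent_sqrt_zero
    (q : ℝ) (hq : 1 < q) (σ : ℝ) (hσ : 0 ≤ σ)
    (M : ℝ → ℕ → ℝ)
    (hM : ∀ p v, M p v = ∑ j ∈ Finset.Icc 1 v,
      (σ + Real.sqrt j) ^ (-(2*p))) :
    Filter.Tendsto (fun v : ℕ =>
        (Real.log (M q v) - q * Real.log (M 1 v)) / ((1-q) * Real.log v))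
      Filter.atTop (nhds 0) := by
  obtain rfl : M = sqrtMoment σ := funext₂ hM
  have hlog : Tendsto (fun v : ℕ => log v) atTop atTop :=
    tendsto_log_atTop.comp tendsto_natCast_atTop_atTop
  obtain ⟨L, hL, hMq⟩ := sqrtMoment.exists_tendsto_pos hσ hq
  have hq_term : Tendsto (fun v : ℕ => log (sqrtMoment σ q v) / log v) atTop (𝓝 0) :=
    (hMq.log hL.ne').div_atTop hlog
  have h1_term : Tendsto (fun v : ℕ => log (sqrtMoment σ 1 v) / log v) atTop (𝓝 0) :=
    tendsto_log_div_of_le_one_add (rpow_pos_of_pos (by linarith : 0 < σ + 1) (-(2 * 1))) hlog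
      (eventually_atTop.mpr ⟨1, fun _ => sqrtMoment.first_term_le hσ 1⟩)
      (Eventually.of_forall (sqrtMoment.le_one_add_log hσ))
  have h := (hq_term.sub (h1_term.const_mul q)).div_const (1 - q)
  rw [mul_zero, sub_zero, zero_div] at h
  refine h.congr fun v => ?_
  rw [mul_comm (1 - q), ← div_div]
  ring
end

section
/- Let $\delta > 0$, let $q > 0$ be real with $q \ne 1$, and let $\sigma' \ge 0$. Define $S_q(v) = \sum_{j=1}^v \big(\sigma' + (v+j)^{\delta}\big)^{-2q}$. Then $\lim_{v\to\infty} \frac{\log S_q(v) - q\,\log S_1(v)}{(1-q)\,\log v} = 1.$ -/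
/-!
All lengths `v + j`, `1 ≤ j ≤ v`, lie in `[v, 2v]`, so every term of `S_p(v)` equals
`(σ' + v^δ)^(-2p)` up to a factor `2^(2|pδ|)`;
hence `log S_p(v) = log v - 2p log (σ' + v^δ) + O(1)`.
In `log S_q - q log S_1` the terms `2q log (σ' + v^δ)` cancel, leaving `(1 - q) log v + O(1)`.
-/

open Real Filter Asymptotics Topology

theorem tendsto_div_nhds_one_of_isBigO_one {α β : Type*} [NormedField β] {l : Filter α}
    {f g : α → β} (hfg : (fun x => f x - g x) =O[l] (fun _ => (1 : β)))
    (hg : Tendsto (fun x => ‖g x‖) l atTop) :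
    Tendsto (fun x => f x / g x) l (𝓝 1) := by
  have hg0 : ∀ᶠ x in l, g x ≠ 0 := (hg.eventually_gt_atTop 0).mono fun _ => norm_pos_iff.1
  exact (isEquivalent_iff_tendsto_one hg0).1
    (hfg.trans_isLittleO ((isLittleO_one_left_iff β).2 hg))

theorem abs_log_add_sub_log_add_le {a b c : ℝ} (ha : 0 ≤ a) (hb : 0 < b) (hc : 0 < c) :
    |log (a + b) - log (a + c)| ≤ |log b - log c| := by
  wlog hbc : c ≤ b generalizing b c
  · rw [abs_sub_comm, abs_sub_comm (log b)]
    exact this hc hb (le_of_not_ge hbc)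
  have hmono : log (a + c) ≤ log (a + b) := log_le_log (by positivity) (by linarith)
  have hcontr : (a + b) / (a + c) ≤ b / c := by
    rw [div_le_div_iff₀ (by positivity) hc]; nlinarith
  rw [abs_of_nonneg (sub_nonneg.2 hmono), abs_of_nonneg (sub_nonneg.2 (log_le_log hc hbc)),
    ← log_div (by positivity) (by positivity), ← log_div hb.ne' hc.ne']
  exact log_le_log (by positivity) hcontr

theorem abs_log_sub_log_le_log_of_le_mul {x y c : ℝ} (hx : 0 < x) (hxy : x ≤ y) (hyc : y ≤ c * x) :
    |log y - log x| ≤ log c := by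
  have hy : 0 < y := hx.trans_le hxy
  rw [abs_of_nonneg (sub_nonneg.2 (log_le_log hx hxy)), ← log_div hy.ne' hx.ne']
  exact log_le_log (by positivity) ((div_le_iff₀ hx).2 hyc)

theorem abs_log_sum_sub_le {ι : Type*} {s : Finset ι} (hs : s.Nonempty) {f : ι → ℝ} {c ε : ℝ}
    (hf : ∀ i ∈ s, 0 < f i) (hfc : ∀ i ∈ s, |log (f i) - c| ≤ ε) :
    |log (∑ i ∈ s, f i) - (log s.card + c)| ≤ ε := by
  have hcard : (0 : ℝ) < s.card := by exact_mod_cast hs.card_pos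
  have hbounds : ∀ i ∈ s, exp (c - ε) ≤ f i ∧ f i ≤ exp (c + ε) := fun i hi => by
    have := abs_le.1 (hfc i hi)
    exact ⟨(le_log_iff_exp_le (hf i hi)).1 (by linarith),
      (log_le_iff_le_exp (hf i hi)).1 (by linarith)⟩
  have hlower : s.card * exp (c - ε) ≤ ∑ i ∈ s, f i := by
    simpa using Finset.card_nsmul_le_sum s f _ fun i hi => (hbounds i hi).1
  have hupper : ∑ i ∈ s, f i ≤ s.card * exp (c + ε) := by
    simpa using Finset.sum_le_card_nsmul s f _ fun i hi => (hbounds i hi).2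
  have hpos : 0 < ∑ i ∈ s, f i := Finset.sum_pos hf hs
  have hlo := log_le_log (by positivity) hlower
  have hhi := log_le_log hpos hupper
  rw [log_mul hcard.ne' (exp_pos _).ne', log_exp] at hlo hhi
  exact abs_le.2 ⟨by linarith, by linarith⟩

theorem abs_log_rpow_add_rpow_sub_le {σ δ p x y : ℝ} (hσ : 0 ≤ σ) (hx : 0 < x) (hxy : x ≤ y)
    (hy : y ≤ 2 * x) :
    |log ((σ + y ^ δ) ^ (-(2 * p))) - -(2 * p) * log (σ + x ^ δ)| ≤ 2 * |p| * |δ| * log 2 := by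
  have hy0 : 0 < y := hx.trans_le hxy
  have hbase : |log (σ + y ^ δ) - log (σ + x ^ δ)| ≤ |δ| * log 2 :=
    calc |log (σ + y ^ δ) - log (σ + x ^ δ)|
        ≤ |log (y ^ δ) - log (x ^ δ)| :=
          abs_log_add_sub_log_add_le hσ (by positivity) (by positivity)
      _ = |δ| * |log y - log x| := by rw [log_rpow hy0, log_rpow hx, ← mul_sub, abs_mul]
      _ ≤ |δ| * log 2 := by gcongr; exact abs_log_sub_log_le_log_of_le_mul hx hxy hy
  rw [log_rpow (by positivity), ← mul_sub, abs_mul, abs_neg, abs_mul, abs_two, mul_assoc _ |δ|]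
  exact mul_le_mul_of_nonneg_left hbase (by positivity)

theorem isBigO_log_sum_rpow_sub (σ δ p : ℝ) (hσ : 0 ≤ σ) :
    (fun v : ℕ => log (∑ j ∈ Finset.Icc 1 v, (σ + ((v : ℝ) + (j : ℝ)) ^ δ) ^ (-(2 * p)))
      - (log v - 2 * p * log (σ + (v : ℝ) ^ δ))) =O[atTop] (fun _ => (1 : ℝ)) := by
  refine IsBigO.of_bound (2 * |p| * |δ| * log 2) ?_
  filter_upwards [eventually_ge_atTop 1] with v hv
  have hv0 : (0 : ℝ) < v := by exact_mod_cast hv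
  have hterm : ∀ j ∈ Finset.Icc 1 v, |log ((σ + ((v : ℝ) + j) ^ δ) ^ (-(2 * p)))
      - -(2 * p) * log (σ + (v : ℝ) ^ δ)| ≤ 2 * |p| * |δ| * log 2 := fun j hj => by
    have hjv : (j : ℝ) ≤ v := by exact_mod_cast (Finset.mem_Icc.1 hj).2
    exact abs_log_rpow_add_rpow_sub_le hσ hv0 (by linarith [j.cast_nonneg (α := ℝ)]) (by linarith)
  have hsum := abs_log_sum_sub_le (Finset.nonempty_Icc.2 hv)
    (fun j _ => rpow_pos_of_pos (by positivity) _) hterm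
  rw [Nat.card_Icc, Nat.add_sub_cancel] at hsum
  rw [norm_one, mul_one, norm_eq_abs]
  convert hsum using 2
  ring

theorem fractal_exponent_one_example_general
    (δ : ℝ) (q : ℝ) (hq1 : q ≠ 1)
    (σ' : ℝ) (hσ : 0 ≤ σ')
    (S : ℝ → ℕ → ℝ)
    (hS : ∀ p v, S p v = ∑ j ∈ Finset.Icc 1 v,
      (σ' + ((v:ℝ) + (j:ℝ)) ^ δ) ^ (-(2*p))) :
    Filter.Tendsto (fun v : ℕ =>
        (Real.log (S q v) - q * Real.log (S 1 v)) / ((1-q) * Real.log v))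
      Filter.atTop (nhds 1) := by
  have hlog : ∀ p, (fun v : ℕ => log (S p v) - (log v - 2 * p * log (σ' + (v : ℝ) ^ δ)))
      =O[atTop] (fun _ => (1 : ℝ)) := by
    simpa only [← hS] using fun p => isBigO_log_sum_rpow_sub σ' δ p hσ
  refine tendsto_div_nhds_one_of_isBigO_one (((hlog q).sub ((hlog 1).const_mul_left q)).congr_left
    fun v => by ring) ?_
  simp only [norm_mul]
  exact (tendsto_norm_atTop_atTop.comp (tendsto_log_atTop.comp tendsto_natCast_atTop_atTop))
    |>.const_mul_atTop (norm_pos_iff.2 (sub_ne_zero.2 hq1.symm))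

/-- the example `ℓ_j = (v+j)^δ` with fractal exponent `D_q = 1`. -/
theorem fractal_exponent_one_example
    (δ : ℝ) (hδ : 0 < δ) (q : ℝ) (hq0 : 0 < q) (hq1 : q ≠ 1)
    (σ' : ℝ) (hσ : 0 ≤ σ')
    (S : ℝ → ℕ → ℝ)
    (hS : ∀ p v, S p v = ∑ j ∈ Finset.Icc 1 v,
      (σ' + ((v:ℝ) + (j:ℝ)) ^ δ) ^ (-(2*p))) :
    Filter.Tendsto (fun v : ℕ =>
        (Real.log (S q v) - q * Real.log (S 1 v)) / ((1-q) * Real.log v))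
      Filter.atTop (nhds 1) :=
  fractal_exponent_one_example_general δ q hq1 σ' hσ S hS
end
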